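/- arXiv:2511.22601 — 3 statements merged into one kernel-verified Lean document; each statement's English description precedes it below -/
import Mathlib

section
/- Let (Σ_A^+, σ_A) be a one-sided subshift of finite type, let ψ ∈ C(Σ_A^+, ℂ) be continuous, and fix an integer n ≥ 2. For each admissible word ω of length n, choose x_ω ∈ C_ω to be the fixed point of σ_A^n in C_ω when such a point exists, and an arbitrary point of C_ω otherwise; for each admissible word ω of length m with 1 ≤ m < n, fix an arbitrary point x_ω ∈ C_ω. Then Σ_{x : σ_A^n(x) = x} e^{S_nψ(x)} − Σ_{j ∈ S} (L_ψ^n χ_j)(x_j) = Σ_{m=2}^{n} Σ_{|ω| = m} [ (L_ψ^n χ_ω)(x_ω) − (L_ψ^n χ_ω)(x_{ω̂}) ], where for a word ω of length m ≥ 2, ω̂ denotes the word of length m−1 obtained by removing the last symbol of ω, and the inner sum is over all admissible words ω of length m. -/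
open Filter Topology

variable {S : Type*}

/-- The carrier set of the one-sided subshift of finite type defined by the
transition matrix `A`: sequences `x : ℕ → S` with `A (x i) (x (i+1)) = 1` for all `i`. -/
def SFT (A : S → S → Bool) : Set (ℕ → S) :=
  {x | ∀ i : ℕ, A (x i) (x (i + 1)) = true}

/-- The left-shift map `σ_A`. -/
def shift (x : ℕ → S) : ℕ → S := fun n => x (n + 1)

/-- An admissible word of length `n`, encoded as `ω : Fin n → S` with
`A(ω_i, ω_{i+1}) = 1` for `0 ≤ i < n - 1`. -/
def AdmissibleWord (A : S → S → Bool) {n : ℕ} (ω : Fin n → S) : Prop :=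
  ∀ i : Fin n, ∀ h : i.val + 1 < n, A (ω i) (ω ⟨i.val + 1, h⟩) = true

/-- The cylinder set `C_ω` of a word `ω`. -/
def cylinder (A : S → S → Bool) {n : ℕ} (ω : Fin n → S) : Set (ℕ → S) :=
  {x | x ∈ SFT A ∧ ∀ i : Fin n, x i.val = ω i}

/-- Concatenation `ωx`: prepend the word `ω` to the sequence `x`. -/
def wordConcat {n : ℕ} (ω : Fin n → S) (x : ℕ → S) : ℕ → S :=
  fun i => if h : i < n then ω ⟨i, h⟩ else x (i - n)

/-- Prepend a single symbol to a sequence. -/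
def scons (j : S) (x : ℕ → S) : ℕ → S := fun i => Nat.casesOn i j x

/-- The periodic extension `ω^∞ = ωωω⋯` of a word of positive length. -/
def periodicExt {n : ℕ} (hn : 0 < n) (ω : Fin n → S) : ℕ → S :=
  fun i => ω ⟨i % n, Nat.mod_lt i hn⟩

/-- The set of fixed points of `σ_A^n` in the subshift. -/
def perSet (A : S → S → Bool) (n : ℕ) : Set (ℕ → S) :=
  {x | x ∈ SFT A ∧ shift^[n] x = x}

/-- Birkhoff sum of a real-valued function under the shift. -/
def birkhoffR (φ : (ℕ → S) → ℝ) (n : ℕ) (x : ℕ → S) : ℝ :=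
  ∑ j ∈ Finset.range n, φ (shift^[j] x)

/-- Birkhoff sum of a complex-valued function under the shift. -/
noncomputable def birkhoffC (ψ : (ℕ → S) → ℂ) (n : ℕ) (x : ℕ → S) : ℂ :=
  ∑ j ∈ Finset.range n, ψ (shift^[j] x)

-- The metric `d_θ`: `d_θ(x, y) = θ^m` where `m` is the smallest index with
-- `x_m ≠ y_m`, and `d_θ(x, x) = 0`.
open Classical in
noncomputable def dtheta (θ : ℝ) (x y : ℕ → S) : ℝ :=
  if h : x = y then 0
  else θ ^ Nat.find (show ∃ m, x m ≠ y m by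
    by_contra hc
    push_neg at hc
    exact h (funext hc))

/-- The Ruelle operator `L_ψ` evaluated on the subshift:
`(L_ψ u)(x) = Σ_{y ∈ σ_A^{-1}(x)} e^{ψ(y)} u(y)`. -/
noncomputable def ruelle [Fintype S] (A : S → S → Bool) (ψ : (ℕ → S) → ℂ)
    (u : (ℕ → S) → ℂ) : (ℕ → S) → ℂ :=
  fun x => ∑ j : S,
    if A j (x 0) = true then Complex.exp (ψ (scons j x)) * u (scons j x) else 0

/-- The characteristic function `χ_ω` of the cylinder `C_ω`. -/
noncomputable def chi (A : S → S → Bool) {n : ℕ} (ω : Fin n → S) : (ℕ → S) → ℂ :=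
  (cylinder A ω).indicator 1

open Classical in
/-- The finite set of admissible words of length `n`. -/
noncomputable def admissibleWords (A : S → S → Bool) [Fintype S] (n : ℕ) :
    Finset (Fin n → S) :=
  Finset.univ.filter fun ω => AdmissibleWord A ω

/-- The Hölder seminorm `|u|_α` (with respect to `d_θ`, on the subshift). -/
noncomputable def holderSeminormC (A : S → S → Bool) (θ α : ℝ)
    (u : (ℕ → S) → ℂ) : ℝ :=
  sSup {c | ∃ x ∈ SFT A, ∃ y ∈ SFT A, x ≠ y ∧
    c = ‖u x - u y‖ / dtheta θ x y ^ α}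

/-- The supremum norm `‖u‖_∞` over the subshift. -/
noncomputable def supNormC (A : S → S → Bool) (u : (ℕ → S) → ℂ) : ℝ :=
  sSup ((fun x => ‖u x‖) '' SFT A)

/-- The Hölder norm `‖u‖_{C^{0,α}} = |u|_α + ‖u‖_∞`. -/
noncomputable def holderNormC (A : S → S → Bool) (θ α : ℝ)
    (u : (ℕ → S) → ℂ) : ℝ :=
  holderSeminormC A θ α u + supNormC A u

/-- The Hölder seminorm of a real-valued function. -/
noncomputable def holderSeminormR (A : S → S → Bool) (θ α : ℝ)
    (φ : (ℕ → S) → ℝ) : ℝ :=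
  sSup {c | ∃ x ∈ SFT A, ∃ y ∈ SFT A, x ≠ y ∧
    c = |φ x - φ y| / dtheta θ x y ^ α}

/-- The supremum norm of a real-valued function over the subshift. -/
noncomputable def supNormR (A : S → S → Bool) (φ : (ℕ → S) → ℝ) : ℝ :=
  sSup ((fun x => |φ x|) '' SFT A)

/-- The Hölder norm of a real-valued function. -/
noncomputable def holderNormR (A : S → S → Bool) (θ α : ℝ)
    (φ : (ℕ → S) → ℝ) : ℝ :=
  holderSeminormR A θ α φ + supNormR A φ

/-- The operator norm of `L_ψ^k` on `C^{0,α}((Σ_A^+, d_θ), ℂ)`. -/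
noncomputable def ruelleOpNorm (A : S → S → Bool) [Fintype S]
    (θ α : ℝ) (ψ : (ℕ → S) → ℂ) (k : ℕ) : ℝ :=
  sSup {c | ∃ u : (ℕ → S) → ℂ, holderNormC A θ α u ≤ 1 ∧
    c = holderNormC A θ α ((ruelle A ψ)^[k] u)}

/-- `Z_m(aφ) = Σ_{|ω|=m} sup_{y ∈ C_ω} e^{a S_mφ(y)}`. -/
noncomputable def Zword (A : S → S → Bool) [Fintype S] (φ : (ℕ → S) → ℝ)
    (a : ℝ) (m : ℕ) : ℝ :=
  ∑ ω ∈ admissibleWords A m,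
    sSup ((fun y => Real.exp (a * birkhoffR φ m y)) '' cylinder A ω)

/-- `P(aφ) = limsup_{m → ∞} (1/m) log Z_m(aφ)`. -/
noncomputable def pressureA (A : S → S → Bool) [Fintype S] (φ : (ℕ → S) → ℝ)
    (a : ℝ) : ℝ :=
  Filter.limsup (fun m : ℕ => Real.log (Zword A φ a m) / m) Filter.atTop

/-- The word `ω̂` obtained from `ω` by removing its last symbol. -/
def wordInit {m : ℕ} (ω : Fin m → S) : Fin (m - 1) → S :=
  fun i => ω ⟨i.val, by have := i.isLt; omega⟩

section TelescopingHelpers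

variable {S : Type*}

lemma shift_iter (k : ℕ) (x : ℕ → S) (i : ℕ) : shift^[k] x i = x (i + k) := by
  induction k generalizing x i with
  | zero => rfl
  | succ k ih => rw [Function.iterate_succ_apply, ih]; rfl

lemma shift_scons (j : S) (x : ℕ → S) : shift (scons j x) = x := rfl

lemma wordConcat_eval_lt {k : ℕ} (ω : Fin k → S) (x : ℕ → S) (i : ℕ) (h : i < k) :
    wordConcat ω x i = ω ⟨i, h⟩ := dif_pos h

lemma wordConcat_eval_ge {k : ℕ} (ω : Fin k → S) (x : ℕ → S) (i : ℕ) (h : ¬ i < k) :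
    wordConcat ω x i = x (i - k) := dif_neg h

lemma wordConcat_cons {k : ℕ} (j : S) (ω : Fin k → S) (x : ℕ → S) :
    wordConcat (Fin.cons j ω) x = scons j (wordConcat ω x) := by
  funext i
  cases i with
  | zero =>
    rw [wordConcat_eval_lt _ _ 0 (Nat.succ_pos k)]
    rfl
  | succ m =>
    show wordConcat (Fin.cons j ω) x (m + 1) = wordConcat ω x m
    by_cases h : m < k
    · rw [wordConcat_eval_lt _ _ (m+1) (by omega), wordConcat_eval_lt _ _ m h]
      exact Fin.cons_succ (α := fun _ => S) j ω ⟨m, h⟩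
    · rw [wordConcat_eval_ge _ _ (m+1) (by omega), wordConcat_eval_ge _ _ m h]
      congr 1
      omega

lemma wordConcat_empty (ω : Fin 0 → S) (x : ℕ → S) : wordConcat ω x = x := by
  funext i
  exact wordConcat_eval_ge ω x i (Nat.not_lt_zero i)

lemma birkhoffC_succ_scons (ψ : (ℕ → S) → ℂ) (k : ℕ) (j : S) (y : ℕ → S) :
    birkhoffC ψ (k+1) (scons j y) = ψ (scons j y) + birkhoffC ψ k y := by
  unfold birkhoffC
  rw [Finset.sum_range_succ']
  simp only [Function.iterate_succ_apply, shift_scons, Function.iterate_zero_apply]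
  exact add_comm _ _

lemma wordConcat_mem_SFT {A : S → S → Bool} {k : ℕ} {ω : Fin k → S} {x : ℕ → S}
    (hx : x ∈ SFT A)
    (hc : ∀ i < k, A (wordConcat ω x i) (wordConcat ω x (i+1)) = true) :
    wordConcat ω x ∈ SFT A := by
  intro i
  by_cases h : i < k
  · exact hc i h
  · rw [wordConcat_eval_ge _ _ i h, wordConcat_eval_ge _ _ (i+1) (by omega)]
    have : i + 1 - k = (i - k) + 1 := by omega
    rw [this]
    exact hx (i - k)

lemma ruelle_sum {ι : Type*} [Fintype S] (A : S → S → Bool) (ψ : (ℕ → S) → ℂ)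
    (s : Finset ι) (u : ι → (ℕ → S) → ℂ) :
    ruelle A ψ (fun x => ∑ i ∈ s, u i x) = fun x => ∑ i ∈ s, ruelle A ψ (u i) x := by
  funext x
  unfold ruelle
  refine (Finset.sum_congr rfl fun j _ => ?_).trans Finset.sum_comm
  by_cases h : A j (x 0) = true
  · simp only [if_pos h, Finset.mul_sum]
  · simp only [if_neg h, Finset.sum_const_zero]

lemma ruelle_iter_sum {ι : Type*} [Fintype S] (A : S → S → Bool) (ψ : (ℕ → S) → ℂ)
    (k : ℕ) (s : Finset ι) (u : ι → (ℕ → S) → ℂ) :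
    (ruelle A ψ)^[k] (fun x => ∑ i ∈ s, u i x) =
      fun x => ∑ i ∈ s, (ruelle A ψ)^[k] (u i) x := by
  induction k generalizing u with
  | zero => rfl
  | succ k ih =>
    rw [Function.iterate_succ_apply, ruelle_sum, ih]
    funext x
    exact Finset.sum_congr rfl fun i _ =>
      congrFun (Function.iterate_succ_apply (ruelle A ψ) k (u i)).symm x

open Classical in
lemma ruelle_iter_apply [Fintype S] (A : S → S → Bool) (ψ : (ℕ → S) → ℂ) (k : ℕ)
    (u : (ℕ → S) → ℂ) (x : ℕ → S) :
    (ruelle A ψ)^[k] u x =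
      ∑ ω : Fin k → S,
        if (∀ i < k, A (wordConcat ω x i) (wordConcat ω x (i+1)) = true)
        then Complex.exp (birkhoffC ψ k (wordConcat ω x)) * u (wordConcat ω x)
        else 0 := by
  induction k generalizing u x with
  | zero =>
    rw [Fintype.sum_unique]
    rw [if_pos (fun i hi => absurd hi (Nat.not_lt_zero i))]
    rw [wordConcat_empty]
    show u x = Complex.exp (birkhoffC ψ 0 x) * u x
    rw [show birkhoffC ψ 0 x = 0 from Finset.sum_range_zero _, Complex.exp_zero, one_mul]
  | succ k ih =>
    rw [Function.iterate_succ_apply, ih]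
    have hsum : ∀ (g : (Fin (k+1) → S) → ℂ),
        ∑ ω : Fin (k+1) → S, g ω = ∑ p : S × (Fin k → S), g (Fin.cons p.1 p.2) :=
      fun g => (Fintype.sum_equiv (Fin.consEquiv fun _ => S) _ g (fun p => rfl)).symm
    rw [hsum, Fintype.sum_prod_type, Finset.sum_comm]
    refine Finset.sum_congr rfl fun ω _ => ?_
    set y := wordConcat ω x with hy
    by_cases hc : ∀ i < k, A (y i) (y (i+1)) = true
    · rw [if_pos hc]
      unfold ruelle
      rw [Finset.mul_sum]
      refine Finset.sum_congr rfl fun j _ => ?_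
      rw [wordConcat_cons]
      by_cases ha : A j (y 0) = true
      · rw [if_pos ha, if_pos ?_, birkhoffC_succ_scons, Complex.exp_add]
        · ring
        · intro i hi
          cases i with
          | zero => exact ha
          | succ m =>
            have hm : m < k := by omega
            exact hc m hm
      · rw [if_neg ha, mul_zero, if_neg ?_]
        intro hcon
        exact ha (hcon 0 (Nat.succ_pos k))
    · rw [if_neg hc, eq_comm]
      refine Finset.sum_eq_zero fun j _ => ?_
      rw [wordConcat_cons, if_neg ?_]
      intro hcon
      exact hc (fun i hi => hcon (i+1) (by omega))

lemma chi_of_mem {A : S → S → Bool} {k : ℕ} {ω : Fin k → S} {z : ℕ → S}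
    (h : z ∈ cylinder A ω) : chi A ω z = 1 := by
  unfold chi
  rw [Set.indicator_of_mem h]
  rfl

lemma chi_of_not_mem {A : S → S → Bool} {k : ℕ} {ω : Fin k → S} {z : ℕ → S}
    (h : z ∉ cylinder A ω) : chi A ω z = 0 :=
  Set.indicator_of_notMem h _

open Classical in
lemma chi_decomp (A : S → S → Bool) [Fintype S] {m : ℕ} (τ : Fin (m-1) → S) (z : ℕ → S) :
    ∑ ω ∈ (admissibleWords A m).filter (fun ω => wordInit ω = τ), chi A ω z
      = chi A τ z := by
  by_cases hz : z ∈ SFT A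
  · by_cases hzτ : z ∈ cylinder A τ
    · rw [chi_of_mem hzτ]
      have hmem : (fun i : Fin m => z i.val) ∈
          (admissibleWords A m).filter (fun ω => wordInit ω = τ) := by
        refine Finset.mem_filter.mpr ⟨?_, funext fun i => hzτ.2 i⟩
        unfold admissibleWords
        refine Finset.mem_filter.mpr ⟨Finset.mem_univ _, fun i h => hz i.val⟩
      rw [Finset.sum_eq_single_of_mem _ hmem ?_]
      · exact chi_of_mem ⟨hz, fun i => rfl⟩
      · intro ω hω hne
        refine chi_of_not_mem fun hzy => hne (funext fun i => (hzy.2 i).symm)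
    · rw [chi_of_not_mem hzτ]
      refine Finset.sum_eq_zero fun ω hω => ?_
      refine chi_of_not_mem fun hzy => ?_
      refine hzτ ⟨hz, fun i => ?_⟩
      have h1 := hzy.2 ⟨i.val, by have := i.isLt; omega⟩
      have h2 : wordInit ω = τ := (Finset.mem_filter.mp hω).2
      rw [h1, ← h2]
      rfl
  · rw [chi_of_not_mem (fun h => hz h.1)]
    exact Finset.sum_eq_zero fun ω _ => chi_of_not_mem (fun h => hz h.1)

lemma periodicExt_coords {n : ℕ} (hn : 0 < n) (ω : Fin n → S) (i : Fin n) :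
    periodicExt hn ω i.val = ω i := by
  unfold periodicExt
  congr 1
  exact Fin.ext (Nat.mod_eq_of_lt i.isLt)

lemma periodicExt_mem_SFT {A : S → S → Bool} {n : ℕ} (hn : 0 < n) {ω : Fin n → S}
    (hω : AdmissibleWord A ω)
    (hb : A (ω ⟨n-1, by omega⟩) (ω ⟨0, hn⟩) = true) :
    periodicExt hn ω ∈ SFT A := by
  intro i
  have key : (i+1) % n = (i % n + 1) % n := (Nat.mod_add_mod i n 1).symm
  by_cases h : i % n + 1 < n
  · have h2 : (i+1) % n = i % n + 1 := by rw [key, Nat.mod_eq_of_lt h]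
    show A (ω ⟨i % n, Nat.mod_lt i hn⟩) (ω ⟨(i+1) % n, Nat.mod_lt (i+1) hn⟩) = true
    simp only [h2]
    exact hω ⟨i % n, Nat.mod_lt i hn⟩ h
  · have hlt : i % n < n := Nat.mod_lt i hn
    have h1 : i % n = n - 1 := by omega
    have h2 : (i+1) % n = 0 := by
      rw [key]
      have : i % n + 1 = n := by omega
      rw [this, Nat.mod_self]
    show A (ω ⟨i % n, Nat.mod_lt i hn⟩) (ω ⟨(i+1) % n, Nat.mod_lt (i+1) hn⟩) = true
    simp only [h1, h2]
    exact hb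

lemma periodicExt_mem_cylinder {A : S → S → Bool} {n : ℕ} (hn : 0 < n) {ω : Fin n → S}
    (hω : AdmissibleWord A ω)
    (hb : A (ω ⟨n-1, by omega⟩) (ω ⟨0, hn⟩) = true) :
    periodicExt hn ω ∈ cylinder A ω :=
  ⟨periodicExt_mem_SFT hn hω hb, fun i => periodicExt_coords hn ω i⟩

lemma periodicExt_periodic {n : ℕ} (hn : 0 < n) (ω : Fin n → S) :
    shift^[n] (periodicExt hn ω) = periodicExt hn ω := by
  funext i
  rw [shift_iter]
  unfold periodicExt
  congr 1
  exact Fin.ext (Nat.add_mod_right i n)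

lemma wordConcat_periodicExt {n : ℕ} (hn : 0 < n) (ω : Fin n → S) :
    wordConcat ω (periodicExt hn ω) = periodicExt hn ω := by
  funext i
  by_cases h : i < n
  · rw [wordConcat_eval_lt _ _ i h]
    exact (periodicExt_coords hn ω ⟨i, h⟩).symm
  · rw [wordConcat_eval_ge _ _ i h]
    unfold periodicExt
    congr 1
    exact Fin.ext (Nat.mod_eq_sub_mod (by omega)).symm

open Classical in
lemma eval_top [Fintype S] (A : S → S → Bool) (ψ : (ℕ → S) → ℂ) {n : ℕ} (hn : 0 < n)
    (ω : Fin n → S) (hω : AdmissibleWord A ω) {x : ℕ → S} (hx : x ∈ cylinder A ω) :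
    (ruelle A ψ)^[n] (chi A ω) x =
      if A (ω ⟨n-1, by omega⟩) (ω ⟨0, hn⟩) = true
      then Complex.exp (birkhoffC ψ n (wordConcat ω x)) else 0 := by
  rw [ruelle_iter_apply]
  have hside : ∀ τ : Fin n → S, τ ∈ Finset.univ → τ ≠ ω →
      (if ∀ i < n, A (wordConcat τ x i) (wordConcat τ x (i+1)) = true
       then Complex.exp (birkhoffC ψ n (wordConcat τ x)) * chi A ω (wordConcat τ x)
       else 0) = 0 := by
    intro τ _ hne
    by_cases hc : ∀ i < n, A (wordConcat τ x i) (wordConcat τ x (i+1)) = true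
    · rw [if_pos hc, chi_of_not_mem ?_, mul_zero]
      intro hmem
      refine hne (funext fun i => ?_)
      have := hmem.2 i
      rw [wordConcat_eval_lt _ _ i.val i.isLt] at this
      rw [← this]
    · rw [if_neg hc]
  rw [Finset.sum_eq_single_of_mem ω (Finset.mem_univ ω) hside]
  have hx0 : x 0 = ω ⟨0, hn⟩ := hx.2 ⟨0, hn⟩
  have hwn : wordConcat ω x n = ω ⟨0, hn⟩ := by
    rw [wordConcat_eval_ge _ _ n (lt_irrefl n), Nat.sub_self, hx0]
  by_cases hb : A (ω ⟨n-1, by omega⟩) (ω ⟨0, hn⟩) = true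
  · have hc : ∀ i < n, A (wordConcat ω x i) (wordConcat ω x (i+1)) = true := by
      intro i hi
      rw [wordConcat_eval_lt _ _ i hi]
      by_cases h1 : i + 1 < n
      · rw [wordConcat_eval_lt _ _ (i+1) h1]
        exact hω ⟨i, hi⟩ h1
      · have hi1 : i + 1 = n := by omega
        rw [hi1, hwn]
        have hieq : i = n - 1 := by omega
        subst hieq
        exact hb
    rw [if_pos hc, if_pos hb, chi_of_mem ?_, mul_one]
    refine ⟨wordConcat_mem_SFT hx.1 hc, fun i => ?_⟩
    rw [wordConcat_eval_lt _ _ i.val i.isLt]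
  · have hc : ¬ ∀ i < n, A (wordConcat ω x i) (wordConcat ω x (i+1)) = true := by
      intro hc
      refine hb ?_
      have := hc (n-1) (by omega)
      rw [wordConcat_eval_lt _ _ (n-1) (by omega)] at this
      have hn1 : n - 1 + 1 = n := by omega
      rw [hn1, hwn] at this
      exact this
    rw [if_neg hc, if_neg hb]

lemma mem_admissibleWords [Fintype S] {A : S → S → Bool} {m : ℕ} {ω : Fin m → S} :
    ω ∈ admissibleWords A m ↔ AdmissibleWord A ω := by
  unfold admissibleWords
  classical
  rw [Finset.mem_filter]; exact and_iff_right (Finset.mem_univ _)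

lemma eq_mod {x : ℕ → S} {n : ℕ} (hn : 0 < n) (hp : ∀ j, x (j + n) = x j) :
    ∀ i, x i = x (i % n) := by
  intro i
  induction i using Nat.strong_induction_on with
  | _ i ih =>
    by_cases h : i < n
    · rw [Nat.mod_eq_of_lt h]
    · calc x i = x ((i - n) + n) := by congr 1; omega
        _ = x (i - n) := hp _
        _ = x ((i - n) % n) := ih _ (by omega)
        _ = x (i % n) := by rw [← Nat.mod_eq_sub_mod (by omega)]

open Classical in
lemma perSet_eq_image [Fintype S] (A : S → S → Bool) {n : ℕ} (hn : 0 < n) :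
    perSet A n = ↑(((admissibleWords A n).filter
        (fun ω => A (ω ⟨n-1, by omega⟩) (ω ⟨0, hn⟩) = true)).image (periodicExt hn)) := by
  ext x
  simp only [Finset.coe_image, Set.mem_image, Finset.mem_coe, Finset.mem_filter,
    mem_admissibleWords]
  constructor
  · rintro ⟨hx, hfix⟩
    have hper : ∀ j, x (j + n) = x j := fun j =>
      (shift_iter n x j).symm.trans (congrFun hfix j)
    refine ⟨fun i => x i.val, ⟨⟨fun i h => hx i.val, ?_⟩, ?_⟩⟩
    · have hxn : x n = x 0 := by have := hper 0; rwa [Nat.zero_add] at this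
      have h1 : n - 1 + 1 = n := by omega
      have h2 := hx (n-1)
      rw [h1, hxn] at h2
      exact h2
    · funext i
      exact (eq_mod hn hper i).symm
  · rintro ⟨ω, ⟨hadm, hb⟩, rfl⟩
    exact ⟨periodicExt_mem_SFT hn hadm hb, periodicExt_periodic hn ω⟩

end TelescopingHelpers

/-- (Telescoping identity.)  Let `ψ ∈ C(Σ_A^+, ℂ)` and `n ≥ 2`.
For each admissible word `ω` of length `n`, choose `x_ω ∈ C_ω` to be the fixed point
of `σ_A^n` in `C_ω` when one exists; for each admissible word of length `1 ≤ m < n`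
fix an arbitrary point of its cylinder.  Then
`Σ_{σ_A^n x = x} e^{S_nψ(x)} − Σ_{j ∈ S} (L_ψ^n χ_j)(x_j)
  = Σ_{m=2}^{n} Σ_{|ω| = m} [ (L_ψ^n χ_ω)(x_ω) − (L_ψ^n χ_ω)(x_{ω̂}) ]`. -/
theorem telescoping_identity
    [Fintype S] [Nonempty S] [TopologicalSpace S] [DiscreteTopology S]
    (A : S → S → Bool) (ψ : (ℕ → S) → ℂ) (hψ : ContinuousOn ψ (SFT A))
    (n : ℕ) (hn : 2 ≤ n)
    (pick : (m : ℕ) → (Fin m → S) → (ℕ → S))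
    (hpick : ∀ m : ℕ, 1 ≤ m → m ≤ n → ∀ ω ∈ admissibleWords A m,
      pick m ω ∈ cylinder A ω)
    (hpickfix : ∀ ω ∈ admissibleWords A n, ∀ z ∈ cylinder A ω,
      shift^[n] z = z → pick n ω = z) :
    (∑ᶠ x ∈ perSet A n, Complex.exp (birkhoffC ψ n x)) -
        (∑ j : S, ((ruelle A ψ)^[n] (chi A (fun _ : Fin 1 => j)))
          (pick 1 (fun _ : Fin 1 => j))) =
      ∑ m ∈ Finset.Icc 2 n, ∑ ω ∈ admissibleWords A m,
        (((ruelle A ψ)^[n] (chi A ω)) (pick m ω) -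
          ((ruelle A ψ)^[n] (chi A ω)) (pick (m - 1) (wordInit ω))) := by
  
  classical
  have hn0 : 0 < n := by omega
  set T : ℕ → ℂ := fun m =>
    ∑ ω ∈ admissibleWords A m, (ruelle A ψ)^[n] (chi A ω) (pick m ω) with hT
  -- Step 1: the second sums collapse fiberwise
  have hstep : ∀ m, 2 ≤ m → m ≤ n →
      (∑ ω ∈ admissibleWords A m,
        (ruelle A ψ)^[n] (chi A ω) (pick (m-1) (wordInit ω))) = T (m - 1) := by
    intro m hm2 hmn
    have hmaps : ∀ ω ∈ admissibleWords A m, wordInit ω ∈ admissibleWords A (m-1) := by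
      intro ω hω
      rw [mem_admissibleWords] at hω ⊢
      intro i h
      have hlt : i.val + 1 < m := by omega
      exact hω ⟨i.val, by omega⟩ hlt
    rw [← Finset.sum_fiberwise_of_maps_to hmaps
      (fun ω => (ruelle A ψ)^[n] (chi A ω) (pick (m-1) (wordInit ω)))]
    refine Finset.sum_congr rfl fun τ _ => ?_
    have h1 : ∀ ω ∈ (admissibleWords A m).filter (fun ω => wordInit ω = τ),
        (ruelle A ψ)^[n] (chi A ω) (pick (m-1) (wordInit ω)) =
        (ruelle A ψ)^[n] (chi A ω) (pick (m-1) τ) := fun ω hω => by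
      rw [(Finset.mem_filter.mp hω).2]
    rw [Finset.sum_congr rfl h1]
    have h2 := congrFun (ruelle_iter_sum A ψ n
      ((admissibleWords A m).filter (fun ω => wordInit ω = τ))
      (fun ω => chi A ω)) (pick (m-1) τ)
    have h3 : (fun z : ℕ → S =>
        ∑ ω ∈ (admissibleWords A m).filter (fun ω => wordInit ω = τ), chi A ω z)
          = chi A τ := funext fun z => chi_decomp A τ z
    rw [← h2, h3]
  -- Step 2: telescoping
  have hRHS : (∑ m ∈ Finset.Icc 2 n, ∑ ω ∈ admissibleWords A m,
        ((ruelle A ψ)^[n] (chi A ω) (pick m ω) -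
          (ruelle A ψ)^[n] (chi A ω) (pick (m - 1) (wordInit ω)))) = T n - T 1 := by
    have hsplit : ∀ m ∈ Finset.Icc 2 n,
        (∑ ω ∈ admissibleWords A m,
          ((ruelle A ψ)^[n] (chi A ω) (pick m ω) -
            (ruelle A ψ)^[n] (chi A ω) (pick (m - 1) (wordInit ω))))
          = T m - T (m-1) := by
      intro m hm
      rw [Finset.mem_Icc] at hm
      rw [Finset.sum_sub_distrib, hstep m hm.1 hm.2]
    have htel : ∀ N : ℕ, 1 ≤ N →
        ∑ m ∈ Finset.Icc 2 N, (T m - T (m-1)) = T N - T 1 := by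
      intro N hN
      induction N with
      | zero => omega
      | succ k ih =>
        rcases Nat.lt_or_ge k 1 with hk | hk
        · have hk0 : k = 0 := by omega
          subst hk0
          rw [Finset.Icc_eq_empty (by omega), Finset.sum_empty, sub_self]
        · rw [Finset.sum_Icc_succ_top (by omega), ih hk]
          have hkk : k + 1 - 1 = k := by omega
          rw [hkk]
          ring
    rw [Finset.sum_congr rfl hsplit, htel n (by omega)]
  -- Step 3: length-1 words
  have hT1 : (∑ j : S, ((ruelle A ψ)^[n] (chi A (fun _ : Fin 1 => j)))
      (pick 1 (fun _ : Fin 1 => j))) = T 1 := by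
    have huniv : admissibleWords A 1 = Finset.univ := by
      unfold admissibleWords
      rw [Finset.filter_true_of_mem]
      intro ω _ i h
      omega
    show _ = ∑ ω ∈ admissibleWords A 1, (ruelle A ψ)^[n] (chi A ω) (pick 1 ω)
    rw [huniv]
    exact Fintype.sum_equiv (Equiv.funUnique (Fin 1) S).symm _ _ (fun j => rfl)
  -- Step 4: periodic points
  have hPer : (∑ᶠ x ∈ perSet A n, Complex.exp (birkhoffC ψ n x)) = T n := by
    rw [perSet_eq_image A hn0, finsum_mem_coe_finset]
    have hinj : ∀ ω ∈ (admissibleWords A n).filter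
          (fun ω => A (ω ⟨n-1, by omega⟩) (ω ⟨0, hn0⟩) = true),
        ∀ ω' ∈ (admissibleWords A n).filter
          (fun ω => A (ω ⟨n-1, by omega⟩) (ω ⟨0, hn0⟩) = true),
        periodicExt hn0 ω = periodicExt hn0 ω' → ω = ω' := by
      intro ω _ ω' _ h
      funext i
      calc ω i = periodicExt hn0 ω i.val := (periodicExt_coords hn0 ω i).symm
        _ = periodicExt hn0 ω' i.val := congrFun h i.val
        _ = ω' i := periodicExt_coords hn0 ω' i
    rw [Finset.sum_image hinj]
    have heval : ∀ ω ∈ admissibleWords A n,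
        (ruelle A ψ)^[n] (chi A ω) (pick n ω) =
          if A (ω ⟨n-1, by omega⟩) (ω ⟨0, hn0⟩) = true
          then Complex.exp (birkhoffC ψ n (periodicExt hn0 ω)) else 0 := by
      intro ω hω
      have hadm := mem_admissibleWords.mp hω
      by_cases hb : A (ω ⟨n-1, by omega⟩) (ω ⟨0, hn0⟩) = true
      · have hz := periodicExt_mem_cylinder hn0 hadm hb
        have hfix := periodicExt_periodic hn0 ω
        have hxeq : pick n ω = periodicExt hn0 ω := hpickfix ω hω _ hz hfix
        rw [hxeq, eval_top A ψ hn0 ω hadm hz, if_pos hb, if_pos hb,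
          wordConcat_periodicExt]
      · have hx := hpick n (by omega) le_rfl ω hω
        rw [eval_top A ψ hn0 ω hadm hx, if_neg hb, if_neg hb]
    show _ = ∑ ω ∈ admissibleWords A n, (ruelle A ψ)^[n] (chi A ω) (pick n ω)
    rw [Finset.sum_congr rfl heval, ← Finset.sum_filter]
  rw [hPer, hT1, hRHS]
end

section
/- Let E be a complex Banach space, let K be a compact topological space, and let T : K → B(E) be a map into the bounded linear operators on E that is continuous with respect to the operator norm. Suppose that the spectral radius of T(t) is strictly less than 1 for every t ∈ K. Then there exist constants ρ ∈ (0,1) and C ≥ 1 such that ‖ T(t)^n ‖ ≤ C ρ^n for all t ∈ K and all n ≥ 1. -/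
open Filter Topology
open scoped ENNReal

lemma exists_pow_norm_lt_half
    {E : Type*} [NormedAddCommGroup E] [NormedSpace ℂ E] [CompleteSpace E]
    (a : E →L[ℂ] E) (h : spectralRadius ℂ a < 1) :
    ∃ n : ℕ, 1 ≤ n ∧ ‖a ^ n‖ < 1/2 := by
  obtain ⟨c, hc1, hc2⟩ := exists_between h
  have hct : c ≠ ⊤ := (hc2.trans_le le_top).ne
  set cr := c.toReal with hcr
  have hcr1 : cr < 1 := by
    have := ENNReal.toReal_strict_mono (by simp) hc2
    simpa using this
  have hcr0 : 0 ≤ cr := ENNReal.toReal_nonneg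
  have h1 : ∀ᶠ n : ℕ in atTop, (‖a ^ n‖₊ : ℝ≥0∞) ^ (1/(n:ℝ)) < c :=
    (spectrum.pow_nnnorm_pow_one_div_tendsto_nhds_spectralRadius a).eventually_lt_const hc1
  have h2 : ∀ᶠ n : ℕ in atTop, cr ^ n < 1/2 :=
    (tendsto_pow_atTop_nhds_zero_of_lt_one hcr0 hcr1).eventually_lt_const (by norm_num)
  obtain ⟨n, ⟨hna, hnc⟩, hn1⟩ := ((h1.and h2).and (eventually_ge_atTop 1)).exists
  refine ⟨n, hn1, ?_⟩
  have hn0 : (n:ℝ) ≠ 0 := by positivity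
  have key : (‖a ^ n‖₊ : ℝ≥0∞) < c ^ n := by
    calc (‖a ^ n‖₊ : ℝ≥0∞) = ((‖a ^ n‖₊ : ℝ≥0∞) ^ (1/(n:ℝ))) ^ (n:ℕ) := by
          rw [← ENNReal.rpow_natCast _ n, ← ENNReal.rpow_mul, one_div,
            inv_mul_cancel₀ hn0, ENNReal.rpow_one]
      _ < c ^ n := ENNReal.pow_lt_pow_left (by omega) hna
  have hlt : ‖a ^ n‖ < cr ^ n := by
    have := ENNReal.toReal_strict_mono (by simp [hct]) key
    simpa [ENNReal.toReal_pow, hcr] using this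
  linarith

/-- Let `E` be a complex Banach space, `K` a compact topological
space, and `T : K → B(E)` a map into the bounded linear operators on `E`, continuous
with respect to the operator norm.  If the spectral radius of `T(t)` is strictly less
than `1` for every `t ∈ K`, then there exist `ρ ∈ (0,1)` and `C ≥ 1` with
`‖T(t)^n‖ ≤ C ρ^n` for all `t ∈ K` and `n ≥ 1`. -/
theorem uniform_spectral_radius_bound
    {E : Type*} [NormedAddCommGroup E] [NormedSpace ℂ E] [CompleteSpace E]
    {K : Type*} [TopologicalSpace K] [CompactSpace K]
    (T : K → E →L[ℂ] E) (hT : Continuous T)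
    (hρ : ∀ t : K, spectralRadius ℂ (T t) < 1) :
    ∃ ρ ∈ Set.Ioo (0 : ℝ) 1, ∃ C : ℝ, 1 ≤ C ∧
      ∀ t : K, ∀ n : ℕ, 1 ≤ n → ‖(T t) ^ n‖ ≤ C * ρ ^ n := by
  rcases isEmpty_or_nonempty K with hK | hK
  · exact ⟨1/2, by norm_num, 1, le_refl 1, fun t => isEmptyElim t⟩
  choose m hm1 hm2 using fun t => exists_pow_norm_lt_half (T t) (hρ t)
  set U : K → Set K := fun t => {x | ‖T x ^ m t‖ < 1/2} with hU
  have hUopen : ∀ t, IsOpen (U t) := fun t =>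
    isOpen_lt ((hT.pow (m t)).norm) continuous_const
  obtain ⟨s, hs⟩ := isCompact_univ.elim_finite_subcover U hUopen
    (fun x _ => Set.mem_iUnion.mpr ⟨x, hm2 x⟩)
  set N : ℕ := max (s.sup m) 1 with hN
  have hN1 : 1 ≤ N := le_max_right _ _
  have hN0 : (N:ℝ) ≠ 0 := by positivity
  obtain ⟨t₀, -, hM⟩ := isCompact_univ.exists_isMaxOn Set.univ_nonempty
    hT.norm.continuousOn
  set M : ℝ := max ‖T t₀‖ 1 with hMdef
  have hM1 : 1 ≤ M := le_max_right _ _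
  have hM0 : 0 ≤ M := by linarith
  have hMb : ∀ x : K, ‖T x‖ ≤ M := fun x => (hM (Set.mem_univ x)).trans (le_max_left _ _)
  set ρ : ℝ := (1/2 : ℝ) ^ ((N:ℝ)⁻¹) with hρdef
  have hρ0 : 0 < ρ := Real.rpow_pos_of_pos (by norm_num) _
  have hρ1 : ρ < 1 := Real.rpow_lt_one (by norm_num) (by norm_num) (by positivity)
  have hρN : ρ ^ N = 1/2 := by
    rw [hρdef, ← Real.rpow_natCast _ N, ← Real.rpow_mul (by norm_num),
      inv_mul_cancel₀ hN0, Real.rpow_one]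
  refine ⟨ρ, ⟨hρ0, hρ1⟩, 2 * M ^ N, ?_, ?_⟩
  · have : (1:ℝ) ≤ M ^ N := one_le_pow₀ hM1
    linarith
  intro x n
  -- find the covering index for x
  have hx : x ∈ ⋃ t ∈ s, U t := hs trivial
  obtain ⟨t, hts, hxt⟩ := Set.mem_iUnion₂.mp hx
  set k : ℕ := m t with hk
  have hk1 : 1 ≤ k := hm1 t
  have hkN : k ≤ N := le_trans (Finset.le_sup hts) (le_max_left _ _)
  have hxk : ‖T x ^ k‖ < 1/2 := hxt
  induction n using Nat.strong_induction_on with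
  | _ n ih =>
  intro hn1
  have hMN1 : (1:ℝ) ≤ M ^ N := one_le_pow₀ hM1
  by_cases hnN : n ≤ N
  · have h1 : ‖T x ^ n‖ ≤ M ^ N := by
      calc ‖T x ^ n‖ ≤ ‖T x‖ ^ n := norm_pow_le' _ (by omega)
        _ ≤ M ^ n := pow_le_pow_left₀ (norm_nonneg _) (hMb x) n
        _ ≤ M ^ N := pow_le_pow_right₀ hM1 hnN
    have h2 : ρ ^ N ≤ ρ ^ n := pow_le_pow_of_le_one hρ0.le hρ1.le hnN
    rw [hρN] at h2
    nlinarith [pow_nonneg hM0 N]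
  · push_neg at hnN
    set p : ℕ := n - k with hp
    have hp1 : 1 ≤ p := by omega
    have hpn : p < n := by omega
    have hsplit : T x ^ n = T x ^ p * T x ^ k := by
      rw [← pow_add]; congr 1; omega
    have hIH : ‖T x ^ p‖ ≤ 2 * M ^ N * ρ ^ p := ih p hpn hp1
    have hρk : 1/2 ≤ ρ ^ k := by
      have := pow_le_pow_of_le_one hρ0.le hρ1.le hkN
      rw [hρN] at this; exact this
    have hnorm : ‖T x ^ n‖ ≤ ‖T x ^ p‖ * ‖T x ^ k‖ := by
      rw [hsplit]; exact norm_mul_le _ _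
    have hρpk : ρ ^ p * ρ ^ k = ρ ^ n := by rw [← pow_add]; congr 1; omega
    have hρp0 : (0:ℝ) < ρ ^ p := pow_pos hρ0 p
    have hρk0 : (0:ℝ) < ρ ^ k := pow_pos hρ0 k
    nlinarith [norm_nonneg (T x ^ p), norm_nonneg (T x ^ k)]
end

section
/- Let (X, 𝔅, μ) be a probability space, let f : X → X be measure-preserving, and let u, v : X → ℝ be bounded measurable functions. Fix an integer K ≥ 1 and real numbers L and M ≥ 0. Suppose that ‖ S_{nK}u ‖_{L²(μ)} ≤ M √(nK) and ‖ S_{nK}v ‖_{L²(μ)} ≤ M √(nK) for all n ≥ 1, and that lim_{n→∞} (1/(nK)) ∫ S_{nK}u · S_{nK}v dμ = L. Then lim_{m→∞} (1/m) ∫ S_m u · S_m v dμ = L. -/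
open MeasureTheory

/-- Birkhoff sum `S_n w = Σ_{j=0}^{n−1} w ∘ f^j`. -/
def birkhoffSumR {X : Type*} (f : X → X) (w : X → ℝ) (n : ℕ) (x : X) : ℝ :=
  ∑ j ∈ Finset.range n, w (f^[j] x)

lemma bsR_eq_birkhoffSum {X : Type*} (f : X → X) (w : X → ℝ) :
    birkhoffSumR f w = birkhoffSum f w := rfl

lemma bs_measurable {X : Type*} [MeasurableSpace X] {f : X → X} (hf : Measurable f)
    {w : X → ℝ} (hw : Measurable w) (n : ℕ) : Measurable (birkhoffSumR f w n) :=
  Finset.measurable_sum _ (fun j _ => hw.comp (hf.iterate j))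

lemma bs_abs_le {X : Type*} {f : X → X} {w : X → ℝ} {Mw : ℝ} (hw : ∀ x, |w x| ≤ Mw)
    (n : ℕ) (x : X) : |birkhoffSumR f w n x| ≤ n * Mw := by
  calc |birkhoffSumR f w n x| ≤ ∑ j ∈ Finset.range n, |w (f^[j] x)| :=
        Finset.abs_sum_le_sum_abs _ _
    _ ≤ ∑ _j ∈ Finset.range n, Mw := Finset.sum_le_sum (fun j _ => hw _)
    _ = n * Mw := by simp [Finset.sum_const, nsmul_eq_mul]

lemma integrable_of_bdd {X : Type*} [MeasurableSpace X] {μ : Measure X} [IsFiniteMeasure μ]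
    {g : X → ℝ} (hg : Measurable g) (C : ℝ) (hC : ∀ x, |g x| ≤ C) : Integrable g μ := by
  have h := memLp_top_of_bound (μ := μ) hg.aestronglyMeasurable C
    (Filter.Eventually.of_forall (fun x => by rw [Real.norm_eq_abs]; exact hC x))
  exact memLp_one_iff_integrable.mp (h.mono_exponent le_top)

lemma abs_integral_le_of_bound {X : Type*} [MeasurableSpace X] {μ : Measure X}
    [IsProbabilityMeasure μ] {h : X → ℝ} (hint : Integrable h μ) (b : ℝ)
    (hb : ∀ x, |h x| ≤ b) : |∫ x, h x ∂μ| ≤ b := by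
  calc |∫ x, h x ∂μ| ≤ ∫ x, |h x| ∂μ := by
        simpa [Real.norm_eq_abs] using norm_integral_le_integral_norm (μ := μ) h
    _ ≤ ∫ _x, b ∂μ := integral_mono hint.abs (integrable_const b) (fun x => hb x)
    _ = b := by simp

lemma abs_integral_le' {X : Type*} [MeasurableSpace X] {μ : Measure X} (h : X → ℝ) :
    |∫ x, h x ∂μ| ≤ ∫ x, |h x| ∂μ := by
  simpa [Real.norm_eq_abs] using norm_integral_le_integral_norm (μ := μ) h

lemma amgm_abs_mul (a b t : ℝ) (ht : 0 < t) : |a * b| ≤ a ^ 2 / (2 * t) + t * b ^ 2 / 2 := by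
  have h : |a * b| * (2 * t) ≤ a ^ 2 + t ^ 2 * b ^ 2 := by
    rcases abs_cases (a * b) with ⟨h1, _⟩ | ⟨h1, _⟩ <;> rw [h1] <;>
      nlinarith [sq_nonneg (a - t * b), sq_nonneg (a + t * b)]
  have he : a ^ 2 / (2 * t) + t * b ^ 2 / 2 = (a ^ 2 + t ^ 2 * b ^ 2) / (2 * t) := by
    field_simp
  rw [he, le_div_iff₀ (by positivity)]
  exact h

lemma sq_integral_le_of_eLpNorm {X : Type*} [MeasurableSpace X] {μ : Measure X}
    [IsProbabilityMeasure μ] {g : X → ℝ} (hg : Measurable g) (C : ℝ) (hC : ∀ x, |g x| ≤ C)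
    {B : ℝ} (hB : 0 ≤ B) (h2 : eLpNorm g 2 μ ≤ ENNReal.ofReal B) :
    ∫ x, g x ^ 2 ∂μ ≤ B ^ 2 := by
  have hmem : MemLp g 2 μ := by
    have h := memLp_top_of_bound (μ := μ) hg.aestronglyMeasurable C
      (Filter.Eventually.of_forall (fun x => by rw [Real.norm_eq_abs]; exact hC x))
    exact h.mono_exponent le_top
  have heq := hmem.eLpNorm_eq_integral_rpow_norm (by norm_num) (by norm_num)
  rw [heq] at h2
  have htr : (2 : ENNReal).toReal = (2 : ℝ) := by norm_num
  rw [htr] at h2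
  have hI : ∫ a, ‖g a‖ ^ (2:ℝ) ∂μ = ∫ x, g x ^ 2 ∂μ := by
    refine integral_congr_ae (Filter.Eventually.of_forall fun x => ?_)
    show ‖g x‖ ^ (2:ℝ) = g x ^ 2
    rw [show ((2:ℝ)) = ((2:ℕ):ℝ) from by norm_num, Real.rpow_natCast, Real.norm_eq_abs, sq_abs]
  rw [hI] at h2
  set I := ∫ x, g x ^ 2 ∂μ with hIdef
  have hInn : 0 ≤ I := integral_nonneg (fun x => sq_nonneg _)
  have hS : I ^ ((2:ℝ)⁻¹) ≤ B := (ENNReal.ofReal_le_ofReal_iff hB).mp h2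
  have : I = (I ^ ((2:ℝ)⁻¹)) ^ 2 := by
    rw [← Real.rpow_natCast (I ^ ((2:ℝ)⁻¹)) 2, ← Real.rpow_mul hInn]
    norm_num
  rw [this]
  exact pow_le_pow_left₀ (Real.rpow_nonneg hInn _) hS 2

set_option maxHeartbeats 1000000 in
/-- Let `(X, μ)` be a probability space, `f` measure-preserving,
and `u, v` bounded measurable.  Fix `K ≥ 1`, `L ∈ ℝ` and `M ≥ 0`.  If
`‖S_{nK}u‖_{L²(μ)} ≤ M √(nK)` and `‖S_{nK}v‖_{L²(μ)} ≤ M √(nK)` for all `n ≥ 1`, and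
`(1/(nK)) ∫ S_{nK}u · S_{nK}v dμ → L`, then `(1/m) ∫ S_m u · S_m v dμ → L`. -/
theorem birkhoff_correlation_limit_along_multiples
    {X : Type*} [MeasurableSpace X] (μ : Measure X) [IsProbabilityMeasure μ]
    (f : X → X) (hf : MeasurePreserving f μ μ)
    (u v : X → ℝ) (hu : Measurable u) (hv : Measurable v)
    (hub : ∃ Mu : ℝ, ∀ x : X, |u x| ≤ Mu) (hvb : ∃ Mv : ℝ, ∀ x : X, |v x| ≤ Mv)
    (K : ℕ) (hK : 1 ≤ K) (L M : ℝ) (hM : 0 ≤ M)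
    (hu2 : ∀ n : ℕ, 1 ≤ n →
      eLpNorm (birkhoffSumR f u (n * K)) 2 μ ≤
        ENNReal.ofReal (M * Real.sqrt (n * K)))
    (hv2 : ∀ n : ℕ, 1 ≤ n →
      eLpNorm (birkhoffSumR f v (n * K)) 2 μ ≤
        ENNReal.ofReal (M * Real.sqrt (n * K)))
    (hlim : Filter.Tendsto
      (fun n : ℕ =>
        (1 / ((n : ℝ) * K)) *
          ∫ x, birkhoffSumR f u (n * K) x * birkhoffSumR f v (n * K) x ∂μ)
      Filter.atTop (nhds L)) :
    Filter.Tendsto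
      (fun m : ℕ =>
        (1 / (m : ℝ)) * ∫ x, birkhoffSumR f u m x * birkhoffSumR f v m x ∂μ)
      Filter.atTop (nhds L) := by
  obtain ⟨Mu, hMu⟩ := hub
  obtain ⟨Mv, hMv⟩ := hvb
  have hX : Nonempty X := by
    by_contra h
    rw [not_nonempty_iff] at h
    have h1 : μ Set.univ = 1 := measure_univ
    rw [Set.univ_eq_empty_iff.mpr h] at h1
    simp at h1
  have hMu0 : 0 ≤ Mu := le_trans (abs_nonneg _) (hMu (Classical.arbitrary X))
  have hMv0 : 0 ≤ Mv := le_trans (abs_nonneg _) (hMv (Classical.arbitrary X))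
  have hfm : Measurable f := hf.measurable
  set C : ℝ := (M^2 + (K*Mu)^2/2 + (K*Mv)^2/2 + (K*Mu)*(K*Mv)) + K*M^2 with hCdef
  set F : ℕ → ℝ := fun n => (1/((n:ℝ)*K)) *
    ∫ x, birkhoffSumR f u (n*K) x * birkhoffSumR f v (n*K) x ∂μ with hFdef
  set G : ℕ → ℝ := fun m => (1/(m:ℝ)) *
    ∫ x, birkhoffSumR f u m x * birkhoffSumR f v m x ∂μ with hGdef
  have hdivK : Filter.Tendsto (fun m : ℕ => m / K) Filter.atTop Filter.atTop :=
    Filter.tendsto_atTop_atTop.mpr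
      (fun b => ⟨b*K, fun m hm => (Nat.le_div_iff_mul_le (by omega)).mpr hm⟩)
  have hg : Filter.Tendsto (fun m => F (m / K)) Filter.atTop (nhds L) := hlim.comp hdivK
  have key : ∀ m : ℕ, K ≤ m → |G m - F (m/K)| ≤ C / Real.sqrt m := by
    intro m hm
    set n := m / K with hn
    have hn1 : 1 ≤ n := (Nat.one_le_div_iff (by omega)).mpr hm
    set r := m % K with hr
    have hdm := Nat.div_add_mod m K
    have hmeq : m = n * K + r := (Nat.div_add_mod' m K).symm
    have hrK : r < K := Nat.mod_lt _ (by omega)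
    have hm1 : (1:ℝ) ≤ (m:ℝ) := by exact_mod_cast le_trans hK hm
    have hm0 : (0:ℝ) < (m:ℝ) := by linarith
    set P : ℝ := (n:ℝ) * (K:ℝ) with hPdef
    have hP : 0 < P := by
      have : (1:ℝ) ≤ (n:ℝ) := by exact_mod_cast hn1
      have : (1:ℝ) ≤ (K:ℝ) := by exact_mod_cast hK
      positivity
    have hPm : P ≤ (m:ℝ) := by
      have h' : n * K ≤ m := Nat.div_mul_le_self m K
      rw [hPdef]
      exact_mod_cast h'
    have hmPK : (m:ℝ) ≤ P + K := by
      have : m ≤ n * K + K := by omega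
      have := (Nat.cast_le (α := ℝ)).mpr this
      push_cast at this
      linarith [this]
    set s : ℝ := Real.sqrt m with hsdef
    have hs : 0 < s := Real.sqrt_pos.mpr hm0
    have hss : s * s = (m:ℝ) := Real.mul_self_sqrt (by positivity)
    have h1s : 1 ≤ s := by
      have h' := Real.sqrt_le_sqrt hm1
      rwa [Real.sqrt_one] at h'
    have hsm : s ≤ (m:ℝ) := by nlinarith
    set U := birkhoffSumR f u (n*K) with hU
    set V := birkhoffSumR f v (n*K) with hV
    set Ru : X → ℝ := fun x => birkhoffSumR f u r (f^[n*K] x) with hRu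
    set Rv : X → ℝ := fun x => birkhoffSumR f v r (f^[n*K] x) with hRv
    have hUm : Measurable U := bs_measurable hfm hu _
    have hVm : Measurable V := bs_measurable hfm hv _
    have hRum : Measurable Ru := (bs_measurable hfm hu r).comp (hfm.iterate _)
    have hRvm : Measurable Rv := (bs_measurable hfm hv r).comp (hfm.iterate _)
    have hcast : ((n*K : ℕ):ℝ) = P := by rw [hPdef]; push_cast; ring
    have bU : ∀ x, |U x| ≤ P * Mu := fun x => by
      have := bs_abs_le (f := f) hMu (n*K) x; rw [hcast] at this; exact this
    have bV : ∀ x, |V x| ≤ P * Mv := fun x => by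
      have := bs_abs_le (f := f) hMv (n*K) x; rw [hcast] at this; exact this
    have hrKr : (r:ℝ) ≤ (K:ℝ) := by exact_mod_cast hrK.le
    have bRu : ∀ x, |Ru x| ≤ K * Mu := fun x =>
      (bs_abs_le hMu r _).trans (mul_le_mul_of_nonneg_right hrKr hMu0)
    have bRv : ∀ x, |Rv x| ≤ K * Mv := fun x =>
      (bs_abs_le hMv r _).trans (mul_le_mul_of_nonneg_right hrKr hMv0)
    have hPMu0 : 0 ≤ P * Mu := mul_nonneg hP.le hMu0
    have hPMv0 : 0 ≤ P * Mv := mul_nonneg hP.le hMv0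
    have hKMu0 : 0 ≤ (K:ℝ) * Mu := mul_nonneg (by positivity) hMu0
    have hKMv0 : 0 ≤ (K:ℝ) * Mv := mul_nonneg (by positivity) hMv0
    -- integrability
    have iUV : Integrable (fun x => U x * V x) μ :=
      integrable_of_bdd (hUm.mul hVm) ((P*Mu)*(P*Mv)) (fun x => by
        rw [abs_mul]; exact mul_le_mul (bU x) (bV x) (abs_nonneg _) hPMu0)
    have iURv : Integrable (fun x => U x * Rv x) μ :=
      integrable_of_bdd (hUm.mul hRvm) ((P*Mu)*(K*Mv)) (fun x => by
        rw [abs_mul]; exact mul_le_mul (bU x) (bRv x) (abs_nonneg _) hPMu0)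
    have iRuV : Integrable (fun x => Ru x * V x) μ :=
      integrable_of_bdd (hRum.mul hVm) ((K*Mu)*(P*Mv)) (fun x => by
        rw [abs_mul]; exact mul_le_mul (bRu x) (bV x) (abs_nonneg _) hKMu0)
    have iRuRv : Integrable (fun x => Ru x * Rv x) μ :=
      integrable_of_bdd (hRum.mul hRvm) ((K*Mu)*(K*Mv)) (fun x => by
        rw [abs_mul]; exact mul_le_mul (bRu x) (bRv x) (abs_nonneg _) hKMu0)
    have iU2 : Integrable (fun x => U x ^ 2) μ :=
      integrable_of_bdd (hUm.pow_const 2) ((P*Mu)^2) (fun x => by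
        rw [abs_pow, ← sq_abs]
        exact pow_le_pow_left₀ (abs_nonneg _) (by simpa using bU x) 2)
    have iV2 : Integrable (fun x => V x ^ 2) μ :=
      integrable_of_bdd (hVm.pow_const 2) ((P*Mv)^2) (fun x => by
        rw [abs_pow, ← sq_abs]
        exact pow_le_pow_left₀ (abs_nonneg _) (by simpa using bV x) 2)
    have iRu2 : Integrable (fun x => Ru x ^ 2) μ :=
      integrable_of_bdd (hRum.pow_const 2) ((K*Mu)^2) (fun x => by
        rw [abs_pow, ← sq_abs]
        exact pow_le_pow_left₀ (abs_nonneg _) (by simpa using bRu x) 2)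
    have iRv2 : Integrable (fun x => Rv x ^ 2) μ :=
      integrable_of_bdd (hRvm.pow_const 2) ((K*Mv)^2) (fun x => by
        rw [abs_pow, ← sq_abs]
        exact pow_le_pow_left₀ (abs_nonneg _) (by simpa using bRv x) 2)
    -- square integral bounds
    have hsqP : (M * Real.sqrt P) ^ 2 = M^2 * P := by
      rw [mul_pow, Real.sq_sqrt hP.le]
    have hIU2 : ∫ x, U x ^ 2 ∂μ ≤ M^2 * P := by
      have h := sq_integral_le_of_eLpNorm hUm (P*Mu) bU
        (B := M * Real.sqrt P) (by positivity) (hu2 n hn1)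
      rwa [hsqP] at h
    have hIV2 : ∫ x, V x ^ 2 ∂μ ≤ M^2 * P := by
      have h := sq_integral_le_of_eLpNorm hVm (P*Mv) bV
        (B := M * Real.sqrt P) (by positivity) (hv2 n hn1)
      rwa [hsqP] at h
    have hIU2' : ∫ x, U x ^ 2 ∂μ ≤ M^2 * m :=
      hIU2.trans (mul_le_mul_of_nonneg_left hPm (by positivity))
    have hIV2' : ∫ x, V x ^ 2 ∂μ ≤ M^2 * m :=
      hIV2.trans (mul_le_mul_of_nonneg_left hPm (by positivity))
    have hIU2nn : 0 ≤ ∫ x, U x ^ 2 ∂μ := integral_nonneg (fun x => sq_nonneg _)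
    have hIV2nn : 0 ≤ ∫ x, V x ^ 2 ∂μ := integral_nonneg (fun x => sq_nonneg _)
    have hIRu2 : ∫ x, Ru x ^ 2 ∂μ ≤ (K*Mu)^2 := by
      calc ∫ x, Ru x ^ 2 ∂μ ≤ ∫ _x, (K*Mu)^2 ∂μ :=
            integral_mono iRu2 (integrable_const _) (fun x => by
              rw [← sq_abs]; exact pow_le_pow_left₀ (abs_nonneg _) (bRu x) 2)
        _ = (K*Mu)^2 := by simp
    have hIRv2 : ∫ x, Rv x ^ 2 ∂μ ≤ (K*Mv)^2 := by
      calc ∫ x, Rv x ^ 2 ∂μ ≤ ∫ _x, (K*Mv)^2 ∂μ :=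
            integral_mono iRv2 (integrable_const _) (fun x => by
              rw [← sq_abs]; exact pow_le_pow_left₀ (abs_nonneg _) (bRv x) 2)
        _ = (K*Mv)^2 := by simp
    have hIRu2nn : 0 ≤ ∫ x, Ru x ^ 2 ∂μ := integral_nonneg (fun x => sq_nonneg _)
    have hIRv2nn : 0 ≤ ∫ x, Rv x ^ 2 ∂μ := integral_nonneg (fun x => sq_nonneg _)
    -- |∫ UV| bound
    have hIUV : |∫ x, U x * V x ∂μ| ≤ M^2 * P := by
      have hc : |∫ x, U x * V x ∂μ| ≤ ∫ x, (U x ^2/2 + V x ^2/2) ∂μ := by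
        calc |∫ x, U x * V x ∂μ| ≤ ∫ x, |U x * V x| ∂μ := abs_integral_le' _
          _ ≤ ∫ x, (U x ^2/2 + V x ^2/2) ∂μ :=
              integral_mono iUV.abs ((iU2.div_const 2).add (iV2.div_const 2)) (fun x => by
                have := amgm_abs_mul (U x) (V x) 1 one_pos
                simpa using this)
      rw [integral_add (iU2.div_const 2) (iV2.div_const 2), integral_div, integral_div] at hc
      linarith
    -- error integrals
    have hE1 : |∫ x, U x * Rv x ∂μ| ≤ (M^2/2 + (K*Mv)^2/2) * s := by
      have hc : |∫ x, U x * Rv x ∂μ| ≤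
          ∫ x, (U x ^2/(2*s) + s * Rv x ^2/2) ∂μ := by
        calc |∫ x, U x * Rv x ∂μ| ≤ ∫ x, |U x * Rv x| ∂μ := abs_integral_le' _
          _ ≤ ∫ x, (U x ^2/(2*s) + s * Rv x ^2/2) ∂μ :=
              integral_mono iURv.abs
                ((iU2.div_const (2*s)).add ((iRv2.const_mul s).div_const 2))
                (fun x => amgm_abs_mul (U x) (Rv x) s hs)
      rw [integral_add (iU2.div_const (2*s)) ((iRv2.const_mul s).div_const 2),
        integral_div, integral_div, integral_const_mul] at hc
      have h1 : (∫ x, U x ^2 ∂μ)/(2*s) ≤ M^2*s/2 := by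
        rw [div_le_iff₀ (by positivity)]
        nlinarith
      have h2 : s*(∫ x, Rv x ^2 ∂μ)/2 ≤ s*(K*Mv)^2/2 := by
        have := mul_le_mul_of_nonneg_left hIRv2 hs.le
        linarith
      nlinarith
    have hE2 : |∫ x, Ru x * V x ∂μ| ≤ (M^2/2 + (K*Mu)^2/2) * s := by
      have hc : |∫ x, Ru x * V x ∂μ| ≤
          ∫ x, (V x ^2/(2*s) + s * Ru x ^2/2) ∂μ := by
        calc |∫ x, Ru x * V x ∂μ| ≤ ∫ x, |Ru x * V x| ∂μ := abs_integral_le' _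
          _ ≤ ∫ x, (V x ^2/(2*s) + s * Ru x ^2/2) ∂μ :=
              integral_mono iRuV.abs
                ((iV2.div_const (2*s)).add ((iRu2.const_mul s).div_const 2))
                (fun x => by
                  have := amgm_abs_mul (V x) (Ru x) s hs
                  calc |Ru x * V x| = |V x * Ru x| := by rw [mul_comm]
                    _ ≤ _ := this)
      rw [integral_add (iV2.div_const (2*s)) ((iRu2.const_mul s).div_const 2),
        integral_div, integral_div, integral_const_mul] at hc
      have h1 : (∫ x, V x ^2 ∂μ)/(2*s) ≤ M^2*s/2 := by
        rw [div_le_iff₀ (by positivity)]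
        nlinarith
      have h2 : s*(∫ x, Ru x ^2 ∂μ)/2 ≤ s*(K*Mu)^2/2 := by
        have := mul_le_mul_of_nonneg_left hIRu2 hs.le
        linarith
      nlinarith
    have hE3 : |∫ x, Ru x * Rv x ∂μ| ≤ (K*Mu)*(K*Mv) :=
      abs_integral_le_of_bound iRuRv _ (fun x => by
        rw [abs_mul]; exact mul_le_mul (bRu x) (bRv x) (abs_nonneg _) hKMu0)
    -- decomposition of S_m
    have hmUdec : ∀ x, birkhoffSumR f u m x = U x + Ru x := by
      intro x
      rw [hmeq]
      exact birkhoffSum_add f u (n*K) r x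
    have hmVdec : ∀ x, birkhoffSumR f v m x = V x + Rv x := by
      intro x
      rw [hmeq]
      exact birkhoffSum_add f v (n*K) r x
    have hfun : (fun x => birkhoffSumR f u m x * birkhoffSumR f v m x) =
        fun x => U x * V x + (U x * Rv x + (Ru x * V x + Ru x * Rv x)) :=
      funext fun x => by rw [hmUdec x, hmVdec x]; ring
    have i234 : Integrable (fun x => U x * Rv x + (Ru x * V x + Ru x * Rv x)) μ :=
      iURv.add (iRuV.add iRuRv)
    have i34 : Integrable (fun x => Ru x * V x + Ru x * Rv x) μ := iRuV.add iRuRv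
    have hsplit : ∫ x, birkhoffSumR f u m x * birkhoffSumR f v m x ∂μ =
        (∫ x, U x * V x ∂μ) + ((∫ x, U x * Rv x ∂μ) +
          ((∫ x, Ru x * V x ∂μ) + (∫ x, Ru x * Rv x ∂μ))) := by
      rw [hfun, integral_add iUV i234, integral_add iURv i34, integral_add iRuV iRuRv]
    set IUV := ∫ x, U x * V x ∂μ with hIUVdef
    set E1 := ∫ x, U x * Rv x ∂μ with hE1def
    set E2 := ∫ x, Ru x * V x ∂μ with hE2def
    set E3 := ∫ x, Ru x * Rv x ∂μ with hE3def
    have hGm : G m = (1/(m:ℝ)) * (IUV + (E1 + (E2 + E3))) := by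
      show (1/(m:ℝ)) * ∫ x, birkhoffSumR f u m x * birkhoffSumR f v m x ∂μ = _
      rw [hsplit]
    have hFn : F n = (1/P) * IUV := by
      show (1/((n:ℝ)*K)) *
        ∫ x, birkhoffSumR f u (n*K) x * birkhoffSumR f v (n*K) x ∂μ = (1/P) * IUV
      rw [hIUVdef, hU, hV, hPdef]
    have hdiffeq : G m - F n = (E1 + E2 + E3)/m + (1/(m:ℝ) - 1/P) * IUV := by
      rw [hGm, hFn]; ring
    rw [hdiffeq]
    -- final numeric estimate
    have habs1 : |(E1 + E2 + E3)/(m:ℝ)| ≤ (|E1| + |E2| + |E3|)/m := by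
      rw [abs_div, abs_of_pos hm0]
      exact (div_le_div_iff_of_pos_right hm0).mpr (abs_add_three _ _ _)
    have hnn1 : 0 ≤ (K:ℝ)*Mu * ((K:ℝ)*Mv) := mul_nonneg hKMu0 hKMv0
    have hnum : |E1| + |E2| + |E3| ≤
        (M^2 + ((K:ℝ)*Mu)^2/2 + ((K:ℝ)*Mv)^2/2 + ((K:ℝ)*Mu)*((K:ℝ)*Mv)) * s := by
      have hx : ((K:ℝ)*Mu)*((K:ℝ)*Mv) ≤ ((K:ℝ)*Mu)*((K:ℝ)*Mv) * s :=
        le_mul_of_one_le_right hnn1 h1s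
      linarith [hE1, hE2, hE3, hx]
    have ht1 : (|E1| + |E2| + |E3|)/(m:ℝ) ≤
        (M^2 + ((K:ℝ)*Mu)^2/2 + ((K:ℝ)*Mv)^2/2 + ((K:ℝ)*Mu)*((K:ℝ)*Mv))/s := by
      rw [div_le_div_iff₀ hm0 hs]
      calc (|E1| + |E2| + |E3|) * s ≤
            ((M^2 + ((K:ℝ)*Mu)^2/2 + ((K:ℝ)*Mv)^2/2 + ((K:ℝ)*Mu)*((K:ℝ)*Mv)) * s) * s :=
            mul_le_mul_of_nonneg_right hnum hs.le
        _ = (M^2 + ((K:ℝ)*Mu)^2/2 + ((K:ℝ)*Mv)^2/2 + ((K:ℝ)*Mu)*((K:ℝ)*Mv)) * m := by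
            rw [mul_assoc, hss]
    have h1m : 1/(m:ℝ) ≤ 1/P := one_div_le_one_div_of_le hP hPm
    have habs2 : |(1/(m:ℝ) - 1/P) * IUV| ≤ (1/P - 1/(m:ℝ)) * |IUV| := by
      rw [abs_mul, abs_of_nonpos (by linarith : 1/(m:ℝ) - 1/P ≤ 0)]
      have he : -(1/(m:ℝ) - 1/P) = 1/P - 1/(m:ℝ) := by ring
      rw [he]
    have ht2 : (1/P - 1/(m:ℝ)) * |IUV| ≤ (K:ℝ)*M^2/s := by
      have hco : 0 ≤ 1/P - 1/(m:ℝ) := by linarith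
      have step1 : (1/P - 1/(m:ℝ)) * |IUV| ≤ (1/P - 1/(m:ℝ)) * (M^2*P) :=
        mul_le_mul_of_nonneg_left hIUV hco
      have heq2 : (1/P - 1/(m:ℝ)) * (M^2*P) = M^2*((m:ℝ)-P)/m := by
        field_simp
      have step2 : M^2*((m:ℝ)-P)/m ≤ M^2*(K:ℝ)/m :=
        (div_le_div_iff_of_pos_right hm0).mpr
          (mul_le_mul_of_nonneg_left (by linarith) (sq_nonneg M))
      have step3 : M^2*(K:ℝ)/m ≤ (K:ℝ)*M^2/s := by
        rw [mul_comm (M^2) ((K:ℝ))]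
        exact div_le_div_of_nonneg_left (by positivity) hs hsm
      calc (1/P - 1/(m:ℝ)) * |IUV| ≤ M^2*((m:ℝ)-P)/m := by rw [← heq2]; exact step1
        _ ≤ M^2*(K:ℝ)/m := step2
        _ ≤ (K:ℝ)*M^2/s := step3
    calc |(E1 + E2 + E3)/(m:ℝ) + (1/(m:ℝ) - 1/P) * IUV| ≤
          |(E1 + E2 + E3)/(m:ℝ)| + |(1/(m:ℝ) - 1/P) * IUV| := abs_add_le _ _
      _ ≤ (|E1| + |E2| + |E3|)/m + (1/P - 1/(m:ℝ)) * |IUV| := add_le_add habs1 habs2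
      _ ≤ (M^2 + ((K:ℝ)*Mu)^2/2 + ((K:ℝ)*Mv)^2/2 + ((K:ℝ)*Mu)*((K:ℝ)*Mv))/s
            + (K:ℝ)*M^2/s := add_le_add ht1 ht2
      _ = C/s := by rw [hCdef]; ring
  have hdiff : Filter.Tendsto (fun m => G m - F (m/K)) Filter.atTop (nhds 0) := by
    have hCs : Filter.Tendsto (fun m : ℕ => C / Real.sqrt m) Filter.atTop (nhds 0) := by
      have h1 : Filter.Tendsto (fun m : ℕ => Real.sqrt m) Filter.atTop Filter.atTop := by
        apply Filter.tendsto_atTop_atTop.mpr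
        intro b
        refine ⟨Nat.ceil (b^2), fun m hm => ?_⟩
        rcases le_or_gt b 0 with hb | hb
        · exact hb.trans (Real.sqrt_nonneg _)
        · have h2 : b^2 ≤ (m:ℝ) := le_trans (Nat.le_ceil _) (by exact_mod_cast hm)
          calc b = Real.sqrt (b^2) := (Real.sqrt_sq hb.le).symm
            _ ≤ Real.sqrt m := Real.sqrt_le_sqrt h2
      have h2 := h1.inv_tendsto_atTop
      have h3 := h2.const_mul C
      simpa [div_eq_mul_inv] using h3
    apply squeeze_zero_norm' ?_ hCs
    filter_upwards [Filter.eventually_atTop.mpr ⟨K, fun m hm => key m hm⟩] with m h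
    simpa [Real.norm_eq_abs] using h
  have hsum := hg.add hdiff
  have heqf : (fun m => F (m/K) + (G m - F (m/K))) = G := by funext m; ring
  rw [heqf] at hsum
  simpa using hsum
end
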